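/- arXiv:1603.05969 — 4 statements merged into one kernel-verified Lean document; each statement's English description precedes it below -/
import Mathlib

section
/- Let W be a finite real reflection group with set of reflections T, let (t_1,…,t_m) be a tuple of reflections, and let 1 ≤ i_1 < i_2 < ⋯ < i_k ≤ m. Then there exist reflections t'_{k+1},…,t'_m such that the tuple (t_{i_1},…,t_{i_k}, t'_{k+1},…,t'_m) lies in the Hurwitz orbit of (t_1,…,t_m); in particular every subsequence of a tuple of reflections occurs as a prefix of some tuple in its Hurwitz orbit. -/
/-
Hurwitz moves only conjugate entries, so they preserve every conjugation-invariant property of the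
entries, in particular being a reflection; the statement is thus really about arbitrary tuples in
a group. There, one Hurwitz move brings the entry at position `p + 1` to position `p` without
touching any other position except `p + 1`, so repeating it pulls any entry leftwards to a chosen
position while fixing everything to its left and everything to the right of where it came from.
Pulling `t_{i_1}, …, t_{i_k}` in turn to positions `1, …, k` produces the required prefix.
-/

open scoped RealInnerProductSpace

variable {V : Type*} [NormedAddCommGroup V] [InnerProductSpace ℝ V] [FiniteDimensional ℝ V]

/-- The orthogonal reflection in the hyperplane `α^⊥`. -/
noncomputable def reflAlong (α : V) : V ≃ₗᵢ[ℝ] V :=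
  Submodule.reflection ((Submodule.span ℝ {α})ᗮ)

/-- An orthogonal reflection: the reflection through the hyperplane orthogonal to some
nonzero vector. -/
def IsReflection (g : V ≃ₗᵢ[ℝ] V) : Prop :=
  ∃ α : V, α ≠ 0 ∧ g = reflAlong α

/-- A finite real reflection group: a finite subgroup of the orthogonal group generated by its
reflections and fixing no nonzero vector. -/
def IsReflectionGroup (W : Subgroup (V ≃ₗᵢ[ℝ] V)) : Prop :=
  (W : Set (V ≃ₗᵢ[ℝ] V)).Finite ∧
    Subgroup.closure {g | g ∈ W ∧ IsReflection g} = W ∧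
    ∀ v : V, (∀ g ∈ W, g v = v) → v = 0
/-- A single Hurwitz move `σ_i` on tuples in a group. -/
def HurwitzMove {G : Type*} [Group G] {m : ℕ} (t t' : Fin m → G) : Prop :=
  ∃ (i : Fin m) (h : (i : ℕ) + 1 < m),
    t' i = t ⟨(i : ℕ) + 1, h⟩ ∧
      t' ⟨(i : ℕ) + 1, h⟩ = (t ⟨(i : ℕ) + 1, h⟩)⁻¹ * t i * t ⟨(i : ℕ) + 1, h⟩ ∧
      ∀ j : Fin m, j ≠ i → j ≠ ⟨(i : ℕ) + 1, h⟩ → t' j = t j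

/-- Two tuples lie in the same Hurwitz orbit when they are related by a finite sequence of
Hurwitz moves and their inverses. -/
def SameHurwitzOrbit {G : Type*} [Group G] {m : ℕ} (t t' : Fin m → G) : Prop :=
  Relation.EqvGen HurwitzMove t t'

section Hurwitz

variable {G : Type*} [Group G] {m : ℕ}

theorem HurwitzMove.forall_iff {P : G → Prop} (hP : ∀ ⦃g h : G⦄, IsConj g h → P g → P h)
    {t t' : Fin m → G} (h : HurwitzMove t t') : (∀ j, P (t j)) ↔ ∀ j, P (t' j) := by
  obtain ⟨i, hi, h₁, h₂, hrest⟩ := h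
  have hconj : IsConj (t i) (t' ⟨i + 1, hi⟩) :=
    isConj_iff.2 ⟨(t ⟨i + 1, hi⟩)⁻¹, by rw [h₂, inv_inv]⟩
  constructor
  · intro ht j
    by_cases hj : j = i
    · rw [hj, h₁]; exact ht _
    by_cases hj' : j = ⟨i + 1, hi⟩
    · rw [hj']; exact hP hconj (ht i)
    rw [hrest j hj hj']; exact ht j
  · intro ht' j
    by_cases hj : j = i
    · rw [hj]; exact hP hconj.symm (ht' _)
    by_cases hj' : j = ⟨i + 1, hi⟩
    · rw [hj', ← h₁]; exact ht' i
    rw [← hrest j hj hj']; exact ht' j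

theorem SameHurwitzOrbit.forall_iff {P : G → Prop}
    (hP : ∀ ⦃g h : G⦄, IsConj g h → P g → P h) {t t' : Fin m → G}
    (h : SameHurwitzOrbit t t') :
    (∀ j, P (t j)) ↔ ∀ j, P (t' j) := by
  induction h with
  | rel _ _ hmove => exact hmove.forall_iff hP
  | refl => rfl
  | symm _ _ _ ih => exact ih.symm
  | trans _ _ _ _ _ ih₁ ih₂ => exact ih₁.trans ih₂

/-- The Hurwitz move `σ_{i+1}`: positions of `Fin m` are counted from `0`. -/
def hurwitzStep (t : Fin m → G) (i : ℕ) (hi : i + 1 < m) : Fin m → G := fun j =>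
  if (j : ℕ) = i then t ⟨i + 1, hi⟩
  else if (j : ℕ) = i + 1 then (t ⟨i + 1, hi⟩)⁻¹ * t ⟨i, by omega⟩ * t ⟨i + 1, hi⟩
  else t j

theorem hurwitzStep_of_ne (t : Fin m → G) {i : ℕ} (hi : i + 1 < m) {j : Fin m}
    (hj : (j : ℕ) ≠ i) (hj' : (j : ℕ) ≠ i + 1) : hurwitzStep t i hi j = t j := by
  simp only [hurwitzStep, if_neg hj, if_neg hj']

theorem hurwitzMove_hurwitzStep (t : Fin m → G) (i : ℕ) (hi : i + 1 < m) :
    HurwitzMove t (hurwitzStep t i hi) := by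
  refine ⟨⟨i, by omega⟩, hi, by simp [hurwitzStep], by simp [hurwitzStep],
    fun j hj hj' => ?_⟩
  exact hurwitzStep_of_ne t hi (fun h => hj (Fin.ext h)) (fun h => hj' (Fin.ext h))

theorem exists_sameHurwitzOrbit_pull (t : Fin m → G) {q p : ℕ} (hqp : q ≤ p)
    (hp : p < m) :
    ∃ t' : Fin m → G, SameHurwitzOrbit t t' ∧ t' ⟨q, by omega⟩ = t ⟨p, hp⟩ ∧
      ∀ j : Fin m, ((j : ℕ) < q ∨ p < j) → t' j = t j := by
  induction p, hqp using Nat.le_induction generalizing t with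
  | base => exact ⟨t, .refl t, rfl, fun _ _ => rfl⟩
  | succ p hqp ih =>
    obtain ⟨t', hst', hq, hrest⟩ := ih (hurwitzStep t p hp) (by omega)
    refine ⟨t', .trans _ _ _ (.rel _ _ (hurwitzMove_hurwitzStep t p hp)) hst', ?_, ?_⟩
    · rw [hq]; simp [hurwitzStep]
    · intro j hj
      rw [hrest j (by omega), hurwitzStep_of_ne t hp (by omega) (by omega)]

theorem Fin.val_le_of_strictMono {k : ℕ} {ι : Fin k → Fin m} (hι : StrictMono ι)
    (j : Fin k) : (j : ℕ) ≤ ι j := by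
  obtain ⟨j, hj⟩ := j
  induction j with
  | zero => exact Nat.zero_le _
  | succ j ih =>
    have hlt : ι ⟨j, by omega⟩ < ι ⟨j + 1, hj⟩ := hι (Fin.mk_lt_mk.2 j.lt_succ_self)
    exact Nat.succ_le_of_lt ((ih (by omega)).trans_lt hlt)

theorem exists_sameHurwitzOrbit_prefix (t : Fin m → G) {k : ℕ} (hkm : k ≤ m)
    (ι : Fin k → Fin m) (hι : StrictMono ι) :
    ∃ t' : Fin m → G, SameHurwitzOrbit t t' ∧ (∀ j, t' (Fin.castLE hkm j) = t (ι j)) ∧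
      ∀ p : Fin m, (∀ j, ι j < p) → t' p = t p := by
  -- The last conjunct keeps the next chosen entry in place for the inductive step.
  induction k with
  | zero => exact ⟨t, .refl t, fun j => j.elim0, fun _ _ => rfl⟩
  | succ k ih =>
    have hlast : ∀ j : Fin k, ι j.castSucc < ι (Fin.last k) := fun j => hι j.castSucc_lt_last
    obtain ⟨t₁, ht₁, hpre₁, hfix₁⟩ :=
      ih (by omega) (ι ∘ Fin.castSucc) (hι.comp (Fin.strictMono_castSucc))
    obtain ⟨t₂, ht₂, hpull, hfix₂⟩ := exists_sameHurwitzOrbit_pull t₁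
      (by simpa using Fin.val_le_of_strictMono hι (Fin.last k)) (ι (Fin.last k)).isLt
    refine ⟨t₂, .trans _ _ _ ht₁ ht₂, fun j => ?_, fun p hp => ?_⟩
    · induction j using Fin.lastCases with
      | last => exact hpull.trans (hfix₁ _ hlast)
      | cast j =>
        rw [hfix₂ _ (Or.inl (by simp))]
        exact hpre₁ j
    · rw [hfix₂ p (Or.inr (hp _)), hfix₁ p (fun j => hp _)]

end Hurwitz

section Reflection

variable {E : Type*} [NormedAddCommGroup E] [InnerProductSpace ℝ E]

theorem conj_reflAlong (u : E ≃ₗᵢ[ℝ] E) (α : E) :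
    u * reflAlong α * u⁻¹ = reflAlong (u α) := by
  have hspan : Submodule.span ℝ {u α} =
      (Submodule.span ℝ {α}).map (u.toLinearEquiv : E →ₗ[ℝ] E) := by
    rw [Submodule.map_span, Set.image_singleton]; rfl
  have horth : (Submodule.span ℝ {u α})ᗮ =
      (Submodule.span ℝ {α})ᗮ.map (u.toLinearEquiv : E →ₗ[ℝ] E) := by
    rw [hspan, Submodule.map_orthogonal_equiv]
  unfold reflAlong
  simp only [horth, Submodule.reflection_map]
  rfl

theorem IsReflection.of_isConj [FiniteDimensional ℝ E] {g h : E ≃ₗᵢ[ℝ] E}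
    (hgh : IsConj g h) (hg : IsReflection g) : IsReflection h := by
  obtain ⟨u, rfl⟩ := isConj_iff.1 hgh
  obtain ⟨α, hα, rfl⟩ := hg
  exact ⟨u α, by simpa using hα, conj_reflAlong u α⟩

end Reflection

theorem stmt4_general (W : Subgroup (V ≃ₗᵢ[ℝ] V))
    (m : ℕ) (t : Fin m → W)
    (ht : ∀ i, IsReflection ((t i : W) : V ≃ₗᵢ[ℝ] V))
    (k : ℕ) (hkm : k ≤ m) (ι : Fin k → Fin m) (hι : StrictMono ι) :
    ∃ t' : Fin m → W,
      SameHurwitzOrbit t t' ∧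
      (∀ i, IsReflection ((t' i : W) : V ≃ₗᵢ[ℝ] V)) ∧
      ∀ j : Fin k, t' (Fin.castLE hkm j) = t (ι j) := by
  obtain ⟨t', horbit, hprefix, -⟩ := exists_sameHurwitzOrbit_prefix t hkm ι hι
  have hconj : ∀ ⦃g h : W⦄, IsConj g h →
      IsReflection (g : V ≃ₗᵢ[ℝ] V) → IsReflection (h : V ≃ₗᵢ[ℝ] V) :=
    fun _ _ hgh => IsReflection.of_isConj (W.subtype.map_isConj hgh)
  exact ⟨t', horbit, (horbit.forall_iff hconj).1 ht, hprefix⟩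

/-- Every subsequence of a reflection tuple occurs as a prefix of some tuple in its Hurwitz
orbit. -/
theorem stmt4 (W : Subgroup (V ≃ₗᵢ[ℝ] V)) (hW : IsReflectionGroup W)
    (m : ℕ) (t : Fin m → W)
    (ht : ∀ i, IsReflection ((t i : W) : V ≃ₗᵢ[ℝ] V))
    (k : ℕ) (hkm : k ≤ m) (ι : Fin k → Fin m) (hι : StrictMono ι) :
    ∃ t' : Fin m → W,
      SameHurwitzOrbit t t' ∧
      (∀ i, IsReflection ((t' i : W) : V ≃ₗᵢ[ℝ] V)) ∧
      ∀ j : Fin k, t' (Fin.castLE hkm j) = t (ι j) :=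
  stmt4_general W m t ht k hkm ι hι
end

section
/- Let V be a real inner product space and let α_1, α_2, α_3 ∈ V form a circuit, with dependence c_1α_1 + c_2α_2 + c_3α_3 = 0 where all c_i are nonzero. Then for each i ∈ {1,2,3}, at most one of the two inner products ⟨c_iα_i, c_jα_j⟩ with j ≠ i is positive; consequently every vertex of the acuteness graph Γ_C has degree at most one, and Γ_C is disconnected. -/
open scoped RealInnerProductSpace

/-- A circuit: a finite linearly dependent set of vectors, every proper subset of which is
linearly independent. -/
def IsCircuit {V' : Type*} [AddCommGroup V'] [Module ℝ V'] (C : Set V') : Prop :=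
  C.Finite ∧ ¬ LinearIndependent ℝ (fun x : C => (x : V')) ∧
    ∀ D : Set V', D ⊂ C → LinearIndependent ℝ (fun x : D => (x : V'))

/-!
Write `βᵢ = cᵢαᵢ`, so that `β₁ + β₂ + β₃ = 0`. Pairing `βᵢ` with this relation gives
`⟪βᵢ, βⱼ⟫ + ⟪βᵢ, βₖ⟫ = -‖βᵢ‖² ≤ 0`, so the two inner products cannot both be positive.
Hence every vertex of the acuteness graph has at most one neighbour, and a graph of maximum
degree one on three vertices is disconnected.
-/

namespace SimpleGraph

variable {W : Type*} {G : SimpleGraph W}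

theorem Walk.eq_or_adj_of_forall_adj_unique (hG : ∀ i j k, G.Adj i j → G.Adj i k → j = k) :
    ∀ {u w : W}, G.Walk u w → u = w ∨ G.Adj u w
  | _, _, .nil => Or.inl rfl
  | _, _, .cons hux p =>
    match p.eq_or_adj_of_forall_adj_unique hG with
    | .inl hxw => Or.inr (hxw ▸ hux)
    | .inr hxw => Or.inl (hG _ _ _ hux.symm hxw)

theorem not_connected_of_forall_adj_unique (hG : ∀ i j k, G.Adj i j → G.Adj i k → j = k)
    {u v w : W} (huv : u ≠ v) (huw : u ≠ w) (hvw : v ≠ w) : ¬ G.Connected := by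
  intro hconn
  have hadj : ∀ x, u ≠ x → G.Adj u x := fun x hux =>
    ((hconn.preconnected u x).some.eq_or_adj_of_forall_adj_unique hG).resolve_left hux
  exact hvw (hG u v w (hadj v huv) (hadj w huw))

end SimpleGraph

section Acuteness

variable {V : Type*} [NormedAddCommGroup V] [InnerProductSpace ℝ V]

theorem sum_inner_erase_eq_neg_norm_sq {ι : Type*} [Fintype ι] [DecidableEq ι] {β : ι → V}
    (hβ : ∑ i, β i = 0) (i : ι) : ∑ j ∈ Finset.univ.erase i, ⟪β i, β j⟫ = -‖β i‖ ^ 2 := by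
  have hfull : ∑ j ∈ Finset.univ.erase i, ⟪β i, β j⟫ + ⟪β i, β i⟫ = 0 := by
    rw [Finset.sum_erase_add _ _ (Finset.mem_univ i), ← inner_sum, hβ, inner_zero_right]
  rw [real_inner_self_eq_norm_sq] at hfull
  linarith

theorem Fin.univ_erase_eq_pair {i j k : Fin 3} (hji : j ≠ i) (hki : k ≠ i) (hjk : j ≠ k) :
    Finset.univ.erase i = {j, k} := by
  revert i j k
  decide

theorem not_pos_inner_and_pos_inner_of_sum_eq_zero {β : Fin 3 → V} (hβ : ∑ i, β i = 0)
    {i j k : Fin 3} (hji : j ≠ i) (hki : k ≠ i) (hjk : j ≠ k) :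
    ¬ (0 < ⟪β i, β j⟫ ∧ 0 < ⟪β i, β k⟫) := by
  rintro ⟨hj, hk⟩
  have hpair : ⟪β i, β j⟫ + ⟪β i, β k⟫ = -‖β i‖ ^ 2 := by
    rw [← Finset.sum_pair (f := fun l => ⟪β i, β l⟫) hjk, ← Fin.univ_erase_eq_pair hji hki hjk,
      sum_inner_erase_eq_neg_norm_sq hβ]
  linarith [sq_nonneg ‖β i‖]

def acutenessGraph {ι : Type*} (β : ι → V) : SimpleGraph ι :=
  SimpleGraph.fromRel fun a b => 0 < ⟪β a, β b⟫

theorem acutenessGraph_adj {ι : Type*} {β : ι → V} {i j : ι} :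
    (acutenessGraph β).Adj i j ↔ i ≠ j ∧ 0 < ⟪β i, β j⟫ := by
  rw [acutenessGraph, SimpleGraph.fromRel_adj, real_inner_comm (β i), or_self]

theorem acutenessGraph_adj_unique {β : Fin 3 → V} (hβ : ∑ i, β i = 0) (i j k : Fin 3)
    (hij : (acutenessGraph β).Adj i j) (hik : (acutenessGraph β).Adj i k) : j = k := by
  rw [acutenessGraph_adj] at hij hik
  by_contra hjk
  exact not_pos_inner_and_pos_inner_of_sum_eq_zero hβ hij.1.symm hik.1.symm hjk ⟨hij.2, hik.2⟩

end Acuteness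

theorem stmt5_general {V : Type*} [NormedAddCommGroup V] [InnerProductSpace ℝ V]
    (α : Fin 3 → V) (c : Fin 3 → ℝ)
    (hdep : ∑ i, c i • α i = 0) :
    (∀ i j k : Fin 3, j ≠ i → k ≠ i → j ≠ k →
      ¬ (0 < ⟪c i • α i, c j • α j⟫ ∧ 0 < ⟪c i • α i, c k • α k⟫)) ∧
    (∀ i j k : Fin 3,
      (SimpleGraph.fromRel fun a b : Fin 3 => 0 < ⟪c a • α a, c b • α b⟫).Adj i j →
      (SimpleGraph.fromRel fun a b : Fin 3 => 0 < ⟪c a • α a, c b • α b⟫).Adj i k → j = k) ∧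
    ¬ (SimpleGraph.fromRel fun a b : Fin 3 => 0 < ⟪c a • α a, c b • α b⟫).Connected := by
  have hunique := acutenessGraph_adj_unique (β := fun i => c i • α i) hdep
  refine ⟨fun i j k => not_pos_inner_and_pos_inner_of_sum_eq_zero hdep, hunique, ?_⟩
  exact SimpleGraph.not_connected_of_forall_adj_unique hunique
    (u := 0) (v := 1) (w := 2) (by decide) (by decide) (by decide)

/-- For a circuit of three vectors in a real inner product space with dependence
`c₁α₁ + c₂α₂ + c₃α₃ = 0`, each vertex of the acuteness graph has degree at most one, and the
acuteness graph is disconnected. -/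
theorem stmt5 {V : Type*} [NormedAddCommGroup V] [InnerProductSpace ℝ V]
    (α : Fin 3 → V) (c : Fin 3 → ℝ)
    (hinj : Function.Injective α)
    (hC : IsCircuit (Set.range α))
    (hc : ∀ i, c i ≠ 0)
    (hdep : ∑ i, c i • α i = 0) :
    (∀ i j k : Fin 3, j ≠ i → k ≠ i → j ≠ k →
      ¬ (0 < ⟪c i • α i, c j • α j⟫ ∧ 0 < ⟪c i • α i, c k • α k⟫)) ∧
    (∀ i j k : Fin 3,
      (SimpleGraph.fromRel fun a b : Fin 3 => 0 < ⟪c a • α a, c b • α b⟫).Adj i j →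
      (SimpleGraph.fromRel fun a b : Fin 3 => 0 < ⟪c a • α a, c b • α b⟫).Adj i k → j = k) ∧
    ¬ (SimpleGraph.fromRel fun a b : Fin 3 => 0 < ⟪c a • α a, c b • α b⟫).Connected :=
  stmt5_general α c hdep
end

section
/- Let W be a finite real reflection group with set of reflections T, and let c be a quasi-Coxeter element of W, i.e., an element admitting a tuple of reflections (t_1,…,t_ℓ) with ℓ = ℓ_T(c), t_1⋯t_ℓ = c, and ⟨t_1,…,t_ℓ⟩ = W. Then W is generated by the set of reflections t that occur as the first entry of some tuple of reflections of length ℓ_T(c) whose product is c. -/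
open scoped RealInnerProductSpace

variable {V : Type*} [NormedAddCommGroup V] [InnerProductSpace ℝ V] [FiniteDimensional ℝ V]

/-- The reflection length `ℓ_T(w)`: the least `m` such that `w` is a product of `m`
reflections of `W`. -/
noncomputable def reflLen (W : Subgroup (V ≃ₗᵢ[ℝ] V)) (w : W) : ℕ :=
  sInf {m | ∃ l : List W, l.length = m ∧
    (∀ x ∈ l, IsReflection ((x : W) : V ≃ₗᵢ[ℝ] V)) ∧ l.prod = w}

/-- A quasi-Coxeter element: an element with a shortest reflection factorization whose factors
generate all of `W`. -/
noncomputable def IsQuasiCoxeter (W : Subgroup (V ≃ₗᵢ[ℝ] V)) (c : W) : Prop :=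
  ∃ t : Fin (reflLen W c) → W,
    (∀ i, IsReflection ((t i : W) : V ≃ₗᵢ[ℝ] V)) ∧
    (List.ofFn t).prod = c ∧
    Subgroup.closure (Set.range t) = ⊤

/-! Hurwitz moves `(…, tᵢ₋₁, tᵢ, …) ↦ (pᵢ tᵢ pᵢ⁻¹, …, tᵢ₋₁, tᵢ₊₁, …)`, with `pᵢ = t₁ ⋯ tᵢ₋₁`,
preserve the product and the length of a reflection factorization, since reflections are closed
under conjugation. So every `pᵢ tᵢ pᵢ⁻¹` is the first entry of a shortest factorization of `c`,
and from these conjugates all the `tᵢ` are recovered one after another. -/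

lemma reflAlong_conj {E : Type*} [NormedAddCommGroup E] [InnerProductSpace ℝ E]
    (g : E ≃ₗᵢ[ℝ] E) (α : E) :
    g * reflAlong α * g⁻¹ = reflAlong (g α) := by
  have hmap : (Submodule.span ℝ {α})ᗮ.map (g.toLinearEquiv : E →ₗ[ℝ] E) =
      (Submodule.span ℝ {g α})ᗮ := by
    rw [Submodule.map_orthogonal_equiv, Submodule.map_span, Set.image_singleton]
    rfl
  have h := Submodule.reflection_map g (Submodule.span ℝ {α})ᗮ
  simp only [hmap] at h
  rw [reflAlong, reflAlong, h]
  rfl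

lemma IsReflection.conj {E : Type*} [NormedAddCommGroup E] [InnerProductSpace ℝ E]
    {r : E ≃ₗᵢ[ℝ] E} (hr : IsReflection r) (g : E ≃ₗᵢ[ℝ] E) :
    IsReflection (g * r * g⁻¹) := by
  obtain ⟨α, hα, rfl⟩ := hr
  exact ⟨g α, by simpa using hα, reflAlong_conj g α⟩

lemma mem_closure_of_forall_conj_prefix_mem {G : Type*} [Group G] {S : Set G} (l : List G)
    (hS : ∀ l₁ a l₂, l = l₁ ++ a :: l₂ → l₁.prod * a * l₁.prod⁻¹ ∈ S) :
    ∀ x ∈ l, x ∈ Subgroup.closure S := by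
  induction l using List.reverseRecOn with
  | nil => simp
  | append_singleton l b ih =>
    have hl : ∀ x ∈ l, x ∈ Subgroup.closure S :=
      ih fun l₁ a l₂ h => hS l₁ a (l₂ ++ [b]) (by simp [h])
    have hprod : l.prod ∈ Subgroup.closure S := list_prod_mem hl
    have hb : b = l.prod⁻¹ * (l.prod * b * l.prod⁻¹) * l.prod := by group
    have hconj : l.prod * b * l.prod⁻¹ ∈ Subgroup.closure S :=
      Subgroup.subset_closure (hS l b [] rfl)
    intro x hx
    rcases List.mem_append.mp hx with hx | hx
    · exact hl x hx
    · rw [List.mem_singleton.mp hx, hb]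
      exact mul_mem (mul_mem (inv_mem hprod) hconj) hprod

lemma List.prod_append_cons_eq_prod_conj_cons {G : Type*} [Group G] (l₁ l₂ : List G) (a : G) :
    (l₁ ++ a :: l₂).prod = (l₁.prod * a * l₁.prod⁻¹ :: (l₁ ++ l₂)).prod := by
  simp only [List.prod_append, List.prod_cons]
  group

section Factorizations

variable {E : Type*} [NormedAddCommGroup E] [InnerProductSpace ℝ E] {W : Subgroup (E ≃ₗᵢ[ℝ] E)}

lemma forall_isReflection_conj_cons {l₁ l₂ : List W} {a : W}
    (h : ∀ x ∈ l₁ ++ a :: l₂, IsReflection ((x : W) : E ≃ₗᵢ[ℝ] E)) :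
    ∀ x ∈ l₁.prod * a * l₁.prod⁻¹ :: (l₁ ++ l₂), IsReflection ((x : W) : E ≃ₗᵢ[ℝ] E) := by
  intro x hx
  rcases List.mem_cons.mp hx with rfl | hx
  · simpa using (h a (by simp)).conj (l₁.prod : W)
  · exact h x (by simp only [List.mem_append, List.mem_cons] at hx ⊢; tauto)

def firstReflections (W : Subgroup (E ≃ₗᵢ[ℝ] E)) (c : W) (n : ℕ) : Set W :=
  {r : W | ∃ (u : Fin n → W) (h0 : 0 < n),
    (∀ i, IsReflection ((u i : W) : E ≃ₗᵢ[ℝ] E)) ∧ (List.ofFn u).prod = c ∧ u ⟨0, h0⟩ = r}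

lemma mem_firstReflections {c : W} {r : W} {l : List W}
    (hrefl : ∀ x ∈ r :: l, IsReflection ((x : W) : E ≃ₗᵢ[ℝ] E)) (hprod : (r :: l).prod = c) :
    r ∈ firstReflections W c (r :: l).length :=
  ⟨(r :: l).get, by simp, fun i => hrefl _ (List.get_mem _ i), by rwa [List.ofFn_get], rfl⟩

end Factorizations

theorem stmt16_general (W : Subgroup (V ≃ₗᵢ[ℝ] V))
    (c : W) (hc : IsQuasiCoxeter W c) :
    Subgroup.closure
      {r : W | ∃ (u : Fin (reflLen W c) → W) (h0 : 0 < reflLen W c),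
        (∀ i, IsReflection ((u i : W) : V ≃ₗᵢ[ℝ] V)) ∧
        (List.ofFn u).prod = c ∧ u ⟨0, h0⟩ = r} = ⊤ := by
  change Subgroup.closure (firstReflections W c (reflLen W c)) = ⊤
  obtain ⟨t, ht, htprod, htgen⟩ := hc
  have hrefl : ∀ x ∈ List.ofFn t, IsReflection ((x : W) : V ≃ₗᵢ[ℝ] V) := by
    simpa [List.mem_ofFn] using ht
  rw [eq_top_iff, ← htgen, Subgroup.closure_le]
  rintro _ ⟨i, rfl⟩
  refine mem_closure_of_forall_conj_prefix_mem (List.ofFn t) (fun l₁ a l₂ hl => ?_) _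
    (List.mem_ofFn.mpr ⟨i, rfl⟩)
  have hlen : (l₁.prod * a * l₁.prod⁻¹ :: (l₁ ++ l₂)).length = reflLen W c := by
    have h := congrArg List.length hl
    simp only [List.length_ofFn, List.length_append, List.length_cons] at h ⊢
    omega
  rw [hl] at hrefl htprod
  rw [← hlen]
  exact mem_firstReflections (forall_isReflection_conj_cons hrefl)
    (by rw [← List.prod_append_cons_eq_prod_conj_cons, htprod])

/-- For a quasi-Coxeter element `c`, the reflections occurring as the first entry of some
shortest reflection factorization of `c` generate `W`. -/
theorem stmt16 (W : Subgroup (V ≃ₗᵢ[ℝ] V)) (hW : IsReflectionGroup W)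
    (c : W) (hc : IsQuasiCoxeter W c) :
    Subgroup.closure
      {r : W | ∃ (u : Fin (reflLen W c) → W) (h0 : 0 < reflLen W c),
        (∀ i, IsReflection ((u i : W) : V ≃ₗᵢ[ℝ] V)) ∧
        (List.ofFn u).prod = c ∧ u ⟨0, h0⟩ = r} = ⊤ :=
  stmt16_general W c hc
end

section
/- Let W be a finite real reflection group in which all reflections are W-conjugate. Let (t_1,…,t_m) with m ≥ 1 be a tuple of reflections such that the subgroup W′ = ⟨t_1,…,t_m⟩ is a proper subgroup of W, and let t be a reflection of W not in W′. Then the two tuples (t_1,…,t_m, t, t) and (t_1,…,t_m, t_1, t_1) are reflection factorizations of the same element w = t_1⋯t_m of length m + 2 with the same multiset of W-conjugacy classes of factors, but they do not lie in the same Hurwitz orbit. -/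
open scoped RealInnerProductSpace

variable {V : Type*} [NormedAddCommGroup V] [InnerProductSpace ℝ V] [FiniteDimensional ℝ V]

/-! The two factorizations are told apart by the Hurwitz invariant "subgroup generated by the
factors": appending `(t₁, t₁)` keeps it equal to `W' = ⟨t₁, …, tₘ⟩`, whereas appending
`(r, r)` puts `r ∉ W'` into it. Both tuples multiply to `t₁ ⋯ tₘ` because reflections are
involutions, and their conjugacy classes agree entrywise because all reflections are conjugate. -/

lemma IsReflection.mul_self {E : Type*} [NormedAddCommGroup E] [InnerProductSpace ℝ E]
    {g : E ≃ₗᵢ[ℝ] E} (h : IsReflection g) : g * g = 1 := by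
  obtain ⟨α, -, rfl⟩ := h
  ext x
  simp [reflAlong]

lemma Fin.range_append {α : Type*} {m n : ℕ} (a : Fin m → α) (b : Fin n → α) :
    Set.range (Fin.append a b) = Set.range a ∪ Set.range b := by
  rw [← Set.Sum.elim_range, ← Fin.append_comp_sumElim]
  exact (finSumFinEquiv.surjective.range_comp _).symm

lemma Fin.range_append_pair {α : Type*} {m : ℕ} (t : Fin m → α) (s : α) :
    Set.range (Fin.append t ![s, s]) = Set.range t ∪ {s} := by
  rw [Fin.range_append, Matrix.range_cons_cons_empty, Set.pair_eq_singleton]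

lemma List.prod_ofFn_append_pair {M : Type*} [Monoid M] {m : ℕ} (t : Fin m → M) {s : M}
    (hs : s * s = 1) : (List.ofFn (Fin.append t ![s, s])).prod = (List.ofFn t).prod := by
  rw [List.ofFn_fin_append, List.prod_append]
  simp [hs]

namespace HurwitzMove

variable {G : Type*} [Group G] {m : ℕ} {t t' : Fin m → G}

lemma closure_range_eq (h : HurwitzMove t t') :
    Subgroup.closure (Set.range t') = Subgroup.closure (Set.range t) := by
  obtain ⟨i, hi, h_left, h_right, h_other⟩ := h
  set j : Fin m := ⟨(i : ℕ) + 1, hi⟩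
  have mem : ∀ k, t k ∈ Subgroup.closure (Set.range t) :=
    fun k => Subgroup.subset_closure (Set.mem_range_self k)
  have mem' : ∀ k, t' k ∈ Subgroup.closure (Set.range t') :=
    fun k => Subgroup.subset_closure (Set.mem_range_self k)
  have h_inv : t i = t' i * t' j * (t' i)⁻¹ := by rw [h_left, h_right]; group
  apply le_antisymm <;> rw [Subgroup.closure_le, Set.range_subset_iff] <;> intro k
  · by_cases hki : k = i
    · rw [hki, h_left]; exact mem j
    by_cases hkj : k = j
    · rw [hkj, h_right]; exact mul_mem (mul_mem (inv_mem (mem j)) (mem i)) (mem j)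
    rw [h_other k hki hkj]; exact mem k
  · by_cases hki : k = i
    · rw [hki, h_inv]; exact mul_mem (mul_mem (mem' i) (mem' j)) (inv_mem (mem' i))
    by_cases hkj : k = j
    · rw [hkj, ← h_left]; exact mem' i
    rw [← h_other k hki hkj]; exact mem' k

end HurwitzMove

lemma SameHurwitzOrbit.closure_range_eq {G : Type*} [Group G] {m : ℕ} {t t' : Fin m → G}
    (h : SameHurwitzOrbit t t') :
    Subgroup.closure (Set.range t) = Subgroup.closure (Set.range t') := by
  induction h with
  | rel _ _ hmove => exact hmove.closure_range_eq.symm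
  | refl => rfl
  | symm _ _ _ ih => exact ih.symm
  | trans _ _ _ _ _ ih₁ ih₂ => exact ih₁.trans ih₂

theorem stmt19_general (W : Subgroup (V ≃ₗᵢ[ℝ] V))
    (hconj : ∀ a b : W, IsReflection ((a : W) : V ≃ₗᵢ[ℝ] V) →
      IsReflection ((b : W) : V ≃ₗᵢ[ℝ] V) → IsConj a b)
    (m : ℕ) (hm : 0 < m) (t : Fin m → W)
    (ht : ∀ i, IsReflection ((t i : W) : V ≃ₗᵢ[ℝ] V))
    (r : W) (hr : IsReflection ((r : W) : V ≃ₗᵢ[ℝ] V))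
    (hrout : r ∉ Subgroup.closure (Set.range t)) :
    (List.ofFn (Fin.append t ![r, r])).prod = (List.ofFn t).prod ∧
    (List.ofFn (Fin.append t ![t ⟨0, hm⟩, t ⟨0, hm⟩])).prod = (List.ofFn t).prod ∧
    Multiset.map (fun i => ConjClasses.mk (Fin.append t ![r, r] i)) Finset.univ.val =
      Multiset.map (fun i => ConjClasses.mk (Fin.append t ![t ⟨0, hm⟩, t ⟨0, hm⟩] i))
        Finset.univ.val ∧
    ¬ SameHurwitzOrbit (Fin.append t ![r, r]) (Fin.append t ![t ⟨0, hm⟩, t ⟨0, hm⟩]) := by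
  set t₁ := t ⟨0, hm⟩
  have range_t₁ : Set.range (Fin.append t ![t₁, t₁]) = Set.range t := by
    rw [Fin.range_append_pair, Set.union_singleton, Set.insert_eq_of_mem (Set.mem_range_self _)]
  have isReflection_append (s : W) (hs : IsReflection (s : V ≃ₗᵢ[ℝ] V)) (k : Fin (m + 2)) :
      IsReflection ((Fin.append t ![s, s] k : W) : V ≃ₗᵢ[ℝ] V) := by
    have hk := Set.mem_range_self (f := Fin.append t ![s, s]) k
    rw [Fin.range_append_pair] at hk
    obtain ⟨i, hi⟩ | hk := hk
    · rw [← hi]; exact ht i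
    · rw [hk]; exact hs
  refine ⟨List.prod_ofFn_append_pair t (Subtype.ext hr.mul_self),
    List.prod_ofFn_append_pair t (Subtype.ext (ht _).mul_self), ?_, fun horb => hrout ?_⟩
  · congr 1
    funext k
    exact ConjClasses.mk_eq_mk_iff_isConj.2
      (hconj _ _ (isReflection_append r hr k) (isReflection_append t₁ (ht _) k))
  · rw [← range_t₁, ← horb.closure_range_eq, Fin.range_append_pair]
    exact Subgroup.subset_closure (Set.mem_union_right _ rfl)

/-- In a finite real reflection group whose reflections are all conjugate, if the factors of a
reflection factorization generate a proper subgroup `W'` and `r` is a reflection outside `W'`,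
then appending `(r, r)` or appending `(t₁, t₁)` gives two factorizations of the same element
with the same multiset of conjugacy classes lying in different Hurwitz orbits. -/
theorem stmt19 (W : Subgroup (V ≃ₗᵢ[ℝ] V)) (hW : IsReflectionGroup W)
    (hconj : ∀ a b : W, IsReflection ((a : W) : V ≃ₗᵢ[ℝ] V) →
      IsReflection ((b : W) : V ≃ₗᵢ[ℝ] V) → IsConj a b)
    (m : ℕ) (hm : 0 < m) (t : Fin m → W)
    (ht : ∀ i, IsReflection ((t i : W) : V ≃ₗᵢ[ℝ] V))
    (hproper : Subgroup.closure (Set.range t) ≠ (⊤ : Subgroup W))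
    (r : W) (hr : IsReflection ((r : W) : V ≃ₗᵢ[ℝ] V))
    (hrout : r ∉ Subgroup.closure (Set.range t)) :
    (List.ofFn (Fin.append t ![r, r])).prod = (List.ofFn t).prod ∧
    (List.ofFn (Fin.append t ![t ⟨0, hm⟩, t ⟨0, hm⟩])).prod = (List.ofFn t).prod ∧
    Multiset.map (fun i => ConjClasses.mk (Fin.append t ![r, r] i)) Finset.univ.val =
      Multiset.map (fun i => ConjClasses.mk (Fin.append t ![t ⟨0, hm⟩, t ⟨0, hm⟩] i))
        Finset.univ.val ∧
    ¬ SameHurwitzOrbit (Fin.append t ![r, r]) (Fin.append t ![t ⟨0, hm⟩, t ⟨0, hm⟩]) :=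
  stmt19_general W hconj m hm t ht r hr hrout
end
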